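/- Let M_p be a point module over a graded algebra A satisfying the standard hypotheses, with structure constants m_j·x_i = α_{j,i} m_{j+1}. If p ∈ Γ is such that at every degree j at least three of the four structure constants α_{j,0}, α_{j,1}, α_{j,2}, α_{j,3} are non-zero, then the M₂(A)-module M_p² = M_p ⊕ M_p, restricted to the subalgebra A^{G,μ} ⊆ M₂(A) generated by v₀ = diag(x₀,x₀), v₁ = diag(x₁,-x₁), v₂ = antidiag(x₂,x₂), v₃ = antidiag(-x₃,x₃), is generated in degree 0 and every non-zero graded submodule has finite codimension; hence M_p² is a fat point module of multiplicity 2 over A^{G,μ}. -/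

import Mathlib

/-- The underlying graded vector space of `M_p² = M_p ⊕ M_p`: in each degree `j ∈ ℕ` a copy
of `k²`, spanned by `(m_j, 0)` and `(0, m_j)`. -/
abbrev FatV (k : Type*) [Field k] := ℕ →₀ (Fin 2 → k)

/-- The degree-`j` matrix of the right action of the generator `vᵢ` of `A^{G,μ} ⊆ M₂(A)`
(where `v₀ = diag(x₀,x₀)`, `v₁ = diag(x₁,-x₁)`, `v₂ = antidiag(x₂,x₂)`,
`v₃ = antidiag(-x₃,x₃)`) on `M_p²`, expressed via the structure constants
`m_j · xᵢ = α j i • m_{j+1}` of the point module `M_p`. -/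
def fatMat (k : Type*) [Field k] (α : ℕ → Fin 4 → k) (i : Fin 4) (j : ℕ) :
    Matrix (Fin 2) (Fin 2) k :=
  if i = 0 then !![α j 0, 0; 0, α j 0]
  else if i = 1 then !![α j 1, 0; 0, -α j 1]
  else if i = 2 then !![0, α j 2; α j 2, 0]
  else !![0, α j 3; -α j 3, 0]

/-- The action of the generator `vᵢ` of `A^{G,μ}` on `M_p²` as a `k`-linear endomorphism:
it takes the degree-`j` component to the degree-`j+1` component by the matrix `fatMat i j`. -/
noncomputable def fatAct (k : Type*) [Field k] (α : ℕ → Fin 4 → k) (i : Fin 4) :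
    FatV k →ₗ[k] FatV k :=
  Finsupp.lsum k fun j => (Finsupp.lsingle (j + 1)).comp (Matrix.toLin' (fatMat k α i j))

/-!
In degree `j` the four generators send `f = (f₀, f₁) ≠ 0` to `α j i` times `(f₀, f₁)`,
`(f₀, -f₁)`, `(f₁, f₀)`, `(f₁, -f₀)`. When at most one `α j i` vanishes, two of these images
have determinant `±(f₀² - f₁²)` and two have determinant `±(f₀² + f₁²)`; since `2 ≠ 0` these
cannot both vanish, so the images span `k²`. Hence a non-zero homogeneous element of a stable
subspace generates every component of higher degree.
-/

section Pigeonhole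

variable {M : Type*} [Zero M]

theorem ne_zero_or_ne_zero_of_three_ne_zero {β : Fin 4 → M}
    (h3 : ∃ a b c : Fin 4, a ≠ b ∧ a ≠ c ∧ b ≠ c ∧ β a ≠ 0 ∧ β b ≠ 0 ∧ β c ≠ 0)
    {i i' : Fin 4} (hii' : i ≠ i') : β i ≠ 0 ∨ β i' ≠ 0 := by
  obtain ⟨a, b, c, hab, hac, hbc, ha, hb, hc⟩ := h3
  by_contra! h
  have : i ≠ a ∧ i ≠ b ∧ i ≠ c ∧ i' ≠ a ∧ i' ≠ b ∧ i' ≠ c := by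
    refine ⟨?_, ?_, ?_, ?_, ?_, ?_⟩ <;> rintro rfl <;> simp_all
  omega

theorem ne_zero_and_ne_zero_or_of_disjoint {ι : Type*} {β : ι → M}
    (hβ : ∀ i i', i ≠ i' → β i ≠ 0 ∨ β i' ≠ 0)
    {a b c d : ι} (hac : a ≠ c) (had : a ≠ d) (hbc : b ≠ c) (hbd : b ≠ d) :
    (β a ≠ 0 ∧ β b ≠ 0) ∨ (β c ≠ 0 ∧ β d ≠ 0) := by
  by_cases ha : β a = 0
  · exact .inr ⟨(hβ a c hac).resolve_left (· ha), (hβ a d had).resolve_left (· ha)⟩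
  by_cases hb : β b = 0
  · exact .inr ⟨(hβ b c hbc).resolve_left (· hb), (hβ b d hbd).resolve_left (· hb)⟩
  exact .inl ⟨ha, hb⟩

end Pigeonhole

section Plane

variable {k : Type*} [Field k]

theorem Submodule.det_eq_zero_of_ne_top {S : Submodule k (Fin 2 → k)} (hS : S ≠ ⊤)
    {u v : Fin 2 → k} (hu : u ∈ S) (hv : v ∈ S) : u 0 * v 1 - u 1 * v 0 = 0 := by
  by_contra hdet
  refine hS (eq_top_iff.2 fun f _ => ?_)
  have hf : f = ((u 0 * v 1 - u 1 * v 0)⁻¹ * (f 0 * v 1 - f 1 * v 0)) • u +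
      ((u 0 * v 1 - u 1 * v 0)⁻¹ * (u 0 * f 1 - u 1 * f 0)) • v := by
    funext i
    fin_cases i <;>
      simp only [Fin.zero_eta, Fin.mk_one, Pi.add_apply, Pi.smul_apply, smul_eq_mul] <;>
      field_simp <;> ring
  rw [hf]
  exact S.add_mem (S.smul_mem _ hu) (S.smul_mem _ hv)

theorem eq_zero_of_sq_sub_sq_eq_zero_of_sq_add_sq_eq_zero (h2 : (2 : k) ≠ 0) {f : Fin 2 → k}
    (hminus : f 0 ^ 2 - f 1 ^ 2 = 0) (hplus : f 0 ^ 2 + f 1 ^ 2 = 0) : f = 0 := by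
  have h0 : f 0 = 0 := by
    have : 2 * f 0 ^ 2 = 0 := by linear_combination hminus + hplus
    simpa [h2] using this
  have h1 : f 1 = 0 := by simpa [h0] using hplus
  ext i
  fin_cases i <;> assumption

end Plane

theorem Finsupp.eq_top_of_forall_single_mem {ι M R : Type*} [Semiring R] [AddCommMonoid M]
    [Module R M] {N : Submodule R (ι →₀ M)} (h : ∀ i m, Finsupp.single i m ∈ N) : N = ⊤ := by
  refine eq_top_iff.2 fun v _ => ?_
  induction v using Finsupp.induction with
  | zero => exact N.zero_mem
  | single_add i m v _ _ ih => exact N.add_mem (h i m) (ih trivial)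

section FatPoint

variable {k : Type*} [Field k] {α : ℕ → Fin 4 → k}

theorem fatAct_single (i : Fin 4) (j : ℕ) (f : Fin 2 → k) :
    fatAct k α i (Finsupp.single j f) = Finsupp.single (j + 1) ((fatMat k α i j).mulVec f) := by
  simp [fatAct, Matrix.toLin'_apply]

theorem fatMat_zero_mulVec (j : ℕ) (f : Fin 2 → k) : (fatMat k α 0 j).mulVec f = α j 0 • f := by
  ext x; fin_cases x <;> simp [fatMat, Matrix.mulVec, dotProduct]

theorem fatMat_one_mulVec (j : ℕ) (f : Fin 2 → k) :
    (fatMat k α 1 j).mulVec f = α j 1 • ![f 0, -f 1] := by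
  ext x; fin_cases x <;> simp [fatMat, Matrix.mulVec, dotProduct]

theorem fatMat_two_mulVec (j : ℕ) (f : Fin 2 → k) :
    (fatMat k α 2 j).mulVec f = α j 2 • ![f 1, f 0] := by
  ext x; fin_cases x <;> simp [fatMat, Matrix.mulVec, dotProduct]

theorem fatMat_three_mulVec (j : ℕ) (f : Fin 2 → k) :
    (fatMat k α 3 j).mulVec f = α j 3 • ![f 1, -f 0] := by
  ext x; fin_cases x <;> simp [fatMat, Matrix.mulVec, dotProduct]

theorem eq_top_of_fatMat_mulVec_mem (h2 : (2 : k) ≠ 0) {j : ℕ}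
    (hα : ∀ i i', i ≠ i' → α j i ≠ 0 ∨ α j i' ≠ 0) {S : Submodule k (Fin 2 → k)}
    {f : Fin 2 → k} (hf : f ≠ 0) (hS : ∀ i, (fatMat k α i j).mulVec f ∈ S) : S = ⊤ := by
  by_contra hS_top
  have mem {i : Fin 4} {u : Fin 2 → k} (hi : α j i ≠ 0)
      (hu : (fatMat k α i j).mulVec f = α j i • u) : u ∈ S :=
    (S.smul_mem_iff hi).mp (hu ▸ hS i)
  have det {i i' : Fin 4} {u u' : Fin 2 → k} (hi : α j i ≠ 0) (hi' : α j i' ≠ 0)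
      (hu : (fatMat k α i j).mulVec f = α j i • u)
      (hu' : (fatMat k α i' j).mulVec f = α j i' • u') : u 0 * u' 1 - u 1 * u' 0 = 0 :=
    S.det_eq_zero_of_ne_top hS_top (mem hi hu) (mem hi' hu')
  have hminus : f 0 ^ 2 - f 1 ^ 2 = 0 := by
    rcases ne_zero_and_ne_zero_or_of_disjoint hα (a := 0) (b := 2) (c := 1) (d := 3)
      (by decide) (by decide) (by decide) (by decide) with ⟨hα0, hα2⟩ | ⟨hα1, hα3⟩
    · have := det hα0 hα2 (fatMat_zero_mulVec j f) (fatMat_two_mulVec j f)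
      simp only [Matrix.cons_val_zero, Matrix.cons_val_one] at this
      linear_combination this
    · have := det hα1 hα3 (fatMat_one_mulVec j f) (fatMat_three_mulVec j f)
      simp only [Matrix.cons_val_zero, Matrix.cons_val_one] at this
      linear_combination -this
  have hplus : f 0 ^ 2 + f 1 ^ 2 = 0 := by
    rcases ne_zero_and_ne_zero_or_of_disjoint hα (a := 1) (b := 2) (c := 0) (d := 3)
      (by decide) (by decide) (by decide) (by decide) with ⟨hα1, hα2⟩ | ⟨hα0, hα3⟩
    · have := det hα1 hα2 (fatMat_one_mulVec j f) (fatMat_two_mulVec j f)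
      simp only [Matrix.cons_val_zero, Matrix.cons_val_one] at this
      linear_combination this
    · have := det hα0 hα3 (fatMat_zero_mulVec j f) (fatMat_three_mulVec j f)
      simp only [Matrix.cons_val_zero, Matrix.cons_val_one] at this
      linear_combination -this
  exact hf (eq_zero_of_sq_sub_sq_eq_zero_of_sq_add_sq_eq_zero h2 hminus hplus)

variable {N : Submodule k (FatV k)}

theorem single_succ_mem_of_single_mem (h2 : (2 : k) ≠ 0)
    (hα : ∀ j i i', i ≠ i' → α j i ≠ 0 ∨ α j i' ≠ 0)
    (hN : ∀ i, ∀ v ∈ N, fatAct k α i v ∈ N) {j : ℕ} {f : Fin 2 → k} (hf : f ≠ 0)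
    (hmem : Finsupp.single j f ∈ N) (g : Fin 2 → k) : Finsupp.single (j + 1) g ∈ N := by
  have hS : N.comap (Finsupp.lsingle (j + 1)) = ⊤ :=
    eq_top_of_fatMat_mulVec_mem h2 (hα j) hf fun i => by
      simpa [fatAct_single] using hN i _ hmem
  simpa using hS.ge (Submodule.mem_top (x := g))

theorem single_mem_of_lt_of_single_mem (h2 : (2 : k) ≠ 0)
    (hα : ∀ j i i', i ≠ i' → α j i ≠ 0 ∨ α j i' ≠ 0)
    (hN : ∀ i, ∀ v ∈ N, fatAct k α i v ∈ N) {j : ℕ} {f : Fin 2 → k} (hf : f ≠ 0)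
    (hmem : Finsupp.single j f ∈ N) {j' : ℕ} (hj' : j < j') (g : Fin 2 → k) :
    Finsupp.single j' g ∈ N := by
  induction j', hj' using Nat.le_induction generalizing g with
  | base => exact single_succ_mem_of_single_mem h2 hα hN hf hmem g
  | succ j' _ ih =>
    obtain ⟨e, he⟩ := exists_ne (0 : Fin 2 → k)
    exact single_succ_mem_of_single_mem h2 hα hN he (ih e) g

end FatPoint

/-- if at every degree `j` at least three of the four structure constants
`α j 0, …, α j 3` of the point module `M_p` are non-zero, then `M_p² = M_p ⊕ M_p`, as a
module over the subalgebra `A^{G,μ} ⊆ M₂(A)` generated by `v₀,…,v₃` (equivalently, a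
`k`-subspace stable under the four generator actions `fatAct i`), is generated in degree 0,
and every non-zero graded stable subspace has finite codimension: it contains all
components of sufficiently high degree.  Hence `M_p²` is a fat point module of
multiplicity 2 over `A^{G,μ}`. -/
theorem stmt17 {k : Type*} [Field k] (h2 : (2 : k) ≠ 0) (α : ℕ → Fin 4 → k)
    (h3 : ∀ j : ℕ, ∃ a b c : Fin 4, a ≠ b ∧ a ≠ c ∧ b ≠ c ∧
      α j a ≠ 0 ∧ α j b ≠ 0 ∧ α j c ≠ 0) :
    (∀ N : Submodule k (FatV k),
      (∀ (i : Fin 4), ∀ v ∈ N, fatAct k α i v ∈ N) →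
      (∀ f : Fin 2 → k, Finsupp.single 0 f ∈ N) → N = ⊤) ∧
    (∀ N : Submodule k (FatV k),
      (∀ (i : Fin 4), ∀ v ∈ N, fatAct k α i v ∈ N) →
      (∀ v ∈ N, ∀ j : ℕ, Finsupp.single j (v j) ∈ N) →
      N ≠ ⊥ → ∃ n : ℕ, ∀ j ≥ n, ∀ f : Fin 2 → k, Finsupp.single j f ∈ N) := by
  have hα : ∀ j i i', i ≠ i' → α j i ≠ 0 ∨ α j i' ≠ 0 := fun j _ _ =>
    ne_zero_or_ne_zero_of_three_ne_zero (h3 j)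
  constructor
  · intro N hN h0
    obtain ⟨e, he⟩ := exists_ne (0 : Fin 2 → k)
    refine Finsupp.eq_top_of_forall_single_mem fun j g => ?_
    rcases Nat.eq_zero_or_pos j with rfl | hj
    · exact h0 g
    · exact single_mem_of_lt_of_single_mem h2 hα hN he (h0 e) hj g
  · intro N hN hgraded hN_ne
    obtain ⟨v, hv, hv_ne⟩ := (Submodule.ne_bot_iff N).mp hN_ne
    obtain ⟨j, hj⟩ := Finsupp.ne_iff.mp hv_ne
    exact ⟨j + 1, fun j' hj' g =>
      single_mem_of_lt_of_single_mem h2 hα hN hj (hgraded v hv j) hj' g⟩
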